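/- arXiv:1506.04434 — 3 statements merged into one kernel-verified Lean document; each statement's English description precedes it below -/
import Mathlib

section
/- For every integer N ≥ 2 and every x ∈ ℝ^N, the gradient ∇V(x) vanishes if and only if x ∈ {O, I₊, I₋}. In particular, if x ∈ ℝ^N \ {O, I₊, I₋} then ∇V(x) ≠ 0. -/
open Real MeasureTheory Matrix Filter

noncomputable section

/-- The discrete Laplacian `K` as an `N × N` matrix:
`(Kx)_k = μ/(4 sin²(π/N)) (2 x_k − x_{k+1} − x_{k−1})` with periodic indices. -/
def Kdisc (μ : ℝ) (N : ℕ) : Matrix (Fin N) (Fin N) ℝ :=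
  Matrix.of fun k l =>
    μ / (4 * Real.sin (Real.pi / N) ^ 2) *
      ((if l = k then 2 else 0) - (if (l : ℕ) = ((k : ℕ) + 1) % N then 1 else 0)
        - (if (l : ℕ) = ((k : ℕ) + (N - 1)) % N then 1 else 0))

/-- The energy `V(x) = (1/4)Σ x_k⁴ + (1/2)⟨x,(K−I)x⟩ + N/4`. -/
def Venergy (μ : ℝ) (N : ℕ) (x : Fin N → ℝ) : ℝ :=
  (1 / 4) * ∑ k, x k ^ 4
    + (1 / 2) * ∑ k, x k * ((Kdisc μ N).mulVec x k - x k)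
    + N / 4

/-- The `k`-th partial derivative `∂_k φ(x)`. -/
def pgrad (N : ℕ) (φ : (Fin N → ℝ) → ℝ) (x : Fin N → ℝ) (k : Fin N) : ℝ :=
  fderiv ℝ φ x (Pi.single k 1)

/-- Squared Euclidean norm of the gradient `|∇φ(x)|²`. -/
def gradSq (N : ℕ) (φ : (Fin N → ℝ) → ℝ) (x : Fin N → ℝ) : ℝ :=
  ∑ k, pgrad N φ x k ^ 2

/-- The Laplacian `Δφ(x) = Σ_k ∂²_k φ(x)`. -/
def lapl (N : ℕ) (φ : (Fin N → ℝ) → ℝ) (x : Fin N → ℝ) : ℝ :=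
  ∑ k, fderiv ℝ (fun y => pgrad N φ y k) x (Pi.single k 1)

/-- The Hessian quadratic form `⟨w, Hess φ(x) w⟩`. -/
def hessQF (N : ℕ) (φ : (Fin N → ℝ) → ℝ) (x w : Fin N → ℝ) : ℝ :=
  fderiv ℝ (fun y => fderiv ℝ φ y w) x w

/-- The orthogonal projection `P` onto the span of `(1,…,1)`, as a matrix. -/
def Pmat (N : ℕ) : Matrix (Fin N) (Fin N) ℝ := Matrix.of fun _ _ => 1 / (N : ℝ)

/-- The unnormalised equilibrium density `e^{−V(x)/(hN)}`. -/
def dens (μ : ℝ) (N : ℕ) (h : ℝ) (x : Fin N → ℝ) : ℝ :=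
  Real.exp (-(Venergy μ N x) / (h * N))

/-- The rescaled potential `f(x) = V(√N x)/(2N)` of the Witten Laplacian. -/
def fWit (μ : ℝ) (N : ℕ) (x : Fin N → ℝ) : ℝ :=
  Venergy μ N (fun k => Real.sqrt N * x k) / (2 * N)

/-- The quasimode `χ(x) = (2/√(2πh)) ∫₀^{x̄} e^{−t²/(2h)} dt`. -/
def chiQ (N : ℕ) (h : ℝ) (x : Fin N → ℝ) : ℝ :=
  (2 / Real.sqrt (2 * Real.pi * h)) *
    ∫ t in (0:ℝ)..((1 / N) * ∑ j, x j), Real.exp (-t ^ 2 / (2 * h))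

/-- The matrix `αP + K + βI`. -/
def Mαβ (μ α β : ℝ) (N : ℕ) : Matrix (Fin N) (Fin N) ℝ :=
  α • Pmat N + Kdisc μ N + β • (1 : Matrix (Fin N) (Fin N) ℝ)

/-- The covariance matrix `Q = (αP + K + βI)⁻¹`. -/
def Qmat (μ α β : ℝ) (N : ℕ) : Matrix (Fin N) (Fin N) ℝ := (Mαβ μ α β N)⁻¹

/-- The generator `L_h φ = −hNΔφ + ∇V·∇φ`. -/
def Lop (μ : ℝ) (N : ℕ) (h : ℝ) (φ : (Fin N → ℝ) → ℝ) (x : Fin N → ℝ) : ℝ :=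
  -(h * N) * lapl N φ x + ∑ k, pgrad N (Venergy μ N) x k * pgrad N φ x k

end

/-!
At a critical point `x_k³ + (Kx)_k − x_k = 0` for all `k`. Pairing this with the mean-zero part
`y = x − x̄` of `x`, and using that `K` kills constants and that `t ↦ t³` is monotone, gives
`⟨y, Ky⟩ ≤ |y|²`. The normalisation of `K` makes `μ` exactly its spectral gap: on mean-zero vectors
`⟨y, Ky⟩ ≥ μ |y|²`, which is the discrete Wirtinger inequality, proved with Parseval's identity for
the discrete Fourier transform. Since `μ > 1`, `y = 0`, so `x` is constant with `c³ = c`.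
-/

open Finset ComplexConjugate

theorem sin_pi_div_le_sin_pi_mul_div {N j : ℕ} (hj : 1 ≤ j) (hjN : j < N) :
    sin (π / N) ≤ sin (π * j / N) := by
  have hN : (0 : ℝ) < N := by exact_mod_cast (Nat.zero_lt_one.trans_le hj).trans hjN
  have hj' : (1 : ℝ) ≤ j := by exact_mod_cast hj
  have hjN' : (j : ℝ) + 1 ≤ N := by exact_mod_cast hjN
  have hsymm : sin (π - π / N) = sin (π / N) := sin_pi_sub _
  have hmem : π * j / N ∈ Set.Icc (π / N) (π - π / N) := by
    constructor
    · gcongr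
      exact le_mul_of_one_le_right pi_pos.le hj'
    · rw [le_sub_iff_add_le, ← add_div, div_le_iff₀ hN]
      nlinarith [pi_pos]
  have hIcc (t : ℝ) (ht : t ∈ Set.Icc (π / N) (π - π / N)) : t ∈ Set.Icc 0 π :=
    ⟨(div_pos pi_pos hN).le.trans ht.1, ht.2.trans (sub_le_self _ (div_pos pi_pos hN).le)⟩
  have hend := Set.nonempty_Icc.mp ⟨_, hmem⟩
  simpa [hsymm] using strictConcaveOn_sin_Icc.concaveOn.min_le_of_mem_Icc
    (hIcc _ (Set.left_mem_Icc.mpr hend)) (hIcc _ (Set.right_mem_Icc.mpr hend)) hmem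

theorem normSq_one_sub_exp_pow (N j : ℕ) :
    Complex.normSq (1 - Complex.exp (2 * π * Complex.I / N) ^ j) = 4 * sin (π * j / N) ^ 2 := by
  have hexp : Complex.exp (2 * π * Complex.I / N) ^ j =
      Complex.exp (Complex.I * ((2 * π * j / N : ℝ) : ℂ)) := by
    rw [← Complex.exp_nat_mul]
    push_cast
    ring_nf
  rw [Complex.normSq_eq_norm_sq, norm_sub_rev, hexp, Complex.norm_exp_I_mul_ofReal_sub_one,
    Real.norm_eq_abs, sq_abs]
  ring_nf

section DiscreteFourier

variable {N : ℕ} [NeZero N]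

def dft (ζ : ℂ) (y : Fin N → ℝ) (j : Fin N) : ℂ :=
  ∑ k : Fin N, (y k : ℂ) * ζ ^ ((j : ℕ) * k)

theorem dft_zero (ζ : ℂ) (y : Fin N → ℝ) : dft ζ y 0 = ((∑ k, y k : ℝ) : ℂ) := by
  simp [dft]

theorem IsPrimitiveRoot.sum_pow_mul_inv_pow {ζ : ℂ} (hζ : IsPrimitiveRoot ζ N) (k l : Fin N) :
    ∑ j : Fin N, (ζ ^ (k : ℕ) * ζ⁻¹ ^ (l : ℕ)) ^ (j : ℕ) = if k = l then (N : ℂ) else 0 := by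
  have hζ0 : ζ ≠ 0 := hζ.ne_zero (NeZero.ne N)
  rw [Fin.sum_univ_eq_sum_range (fun j => (ζ ^ (k : ℕ) * ζ⁻¹ ^ (l : ℕ)) ^ j)]
  split_ifs with hkl
  · simp [hkl, hζ0]
  · have hne : ζ ^ (k : ℕ) * ζ⁻¹ ^ (l : ℕ) ≠ 1 := by
      rw [inv_pow, Ne, mul_inv_eq_one₀ (pow_ne_zero _ hζ0)]
      exact fun h => hkl (Fin.ext (hζ.pow_inj k.isLt l.isLt h))
    have hpow : (ζ ^ (k : ℕ) * ζ⁻¹ ^ (l : ℕ)) ^ N = 1 := by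
      rw [mul_pow, ← pow_mul, ← pow_mul, mul_comm (k : ℕ), mul_comm (l : ℕ), pow_mul, pow_mul,
        inv_pow, hζ.pow_eq_one]
      simp
    rw [geom_sum_eq hne, hpow, sub_self, zero_div]

theorem IsPrimitiveRoot.sum_normSq_dft {ζ : ℂ} (hζ : IsPrimitiveRoot ζ N) (y : Fin N → ℝ) :
    ∑ j, Complex.normSq (dft ζ y j) = N * ∑ k, y k ^ 2 := by
  have hconj : conj ζ = ζ⁻¹ :=
    (Complex.inv_eq_conj (Complex.norm_eq_one_of_pow_eq_one hζ.pow_eq_one (NeZero.ne N))).symm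
  have hterm (j : Fin N) : (Complex.normSq (dft ζ y j) : ℂ) =
      ∑ k, ∑ l, (y k * y l : ℂ) * (ζ ^ (k : ℕ) * ζ⁻¹ ^ (l : ℕ)) ^ (j : ℕ) := by
    rw [← Complex.mul_conj, dft, map_sum, sum_mul_sum]
    refine sum_congr rfl fun k _ => sum_congr rfl fun l _ => ?_
    simp only [map_mul, map_pow, Complex.conj_ofReal, hconj]
    ring
  apply Complex.ofReal_injective
  push_cast
  simp only [hterm]
  rw [sum_comm, mul_sum]
  refine sum_congr rfl fun k _ => ?_
  rw [sum_comm]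
  simp only [← mul_sum, hζ.sum_pow_mul_inv_pow, mul_ite, mul_zero, sum_ite_eq, mem_univ, if_true]
  ring

theorem dft_comp_add_one {ζ : ℂ} (hζ : ζ ^ N = 1) (y : Fin N → ℝ) (j : Fin N) :
    ζ ^ (j : ℕ) * dft ζ (fun k => y (k + 1)) j = dft ζ y j := by
  rw [dft, dft, mul_sum]
  refine Fintype.sum_equiv (Equiv.addRight 1) _ _ fun k => ?_
  have hval : ((k + 1 : Fin N) : ℕ) ≡ k + 1 [MOD N] := by
    simp [Nat.ModEq, Fin.val_add]
  rw [Equiv.coe_addRight, pow_eq_pow_of_modEq (hval.mul_left j) hζ]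
  ring

theorem normSq_dft_sub {ζ : ℂ} (hζ : ζ ^ N = 1) (y : Fin N → ℝ) (j : Fin N) :
    Complex.normSq (dft ζ (fun k => y (k + 1) - y k) j) =
      Complex.normSq (1 - ζ ^ (j : ℕ)) * Complex.normSq (dft ζ y j) := by
  have hnorm : Complex.normSq (ζ ^ (j : ℕ)) = 1 := by
    rw [Complex.normSq_eq_norm_sq, norm_pow,
      Complex.norm_eq_one_of_pow_eq_one hζ (NeZero.ne N), one_pow, one_pow]
  have hdiff : ζ ^ (j : ℕ) * dft ζ (fun k => y (k + 1) - y k) j =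
      (1 - ζ ^ (j : ℕ)) * dft ζ y j := by
    have hsub : dft ζ (fun k => y (k + 1) - y k) j = dft ζ (fun k => y (k + 1)) j - dft ζ y j := by
      simp only [dft, ← sum_sub_distrib, Complex.ofReal_sub, sub_mul]
    rw [hsub, mul_sub, dft_comp_add_one hζ]
    ring
  rw [← Complex.normSq_mul, ← hdiff, Complex.normSq_mul, hnorm, one_mul]

theorem discrete_wirtinger (y : Fin N → ℝ) (hy : ∑ k, y k = 0) :
    4 * sin (π / N) ^ 2 * ∑ k, y k ^ 2 ≤ ∑ k, (y (k + 1) - y k) ^ 2 := by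
  set ζ := Complex.exp (2 * π * Complex.I / N)
  have hζ : IsPrimitiveRoot ζ N := Complex.isPrimitiveRoot_exp N (NeZero.ne N)
  have hN : (0 : ℝ) < N := Nat.cast_pos.mpr (Nat.pos_of_neZero N)
  have hmode (j : Fin N) : 4 * sin (π / N) ^ 2 * Complex.normSq (dft ζ y j) ≤
      Complex.normSq (1 - ζ ^ (j : ℕ)) * Complex.normSq (dft ζ y j) := by
    rcases eq_or_ne j 0 with rfl | hj
    · simp [dft_zero, hy]
    · refine mul_le_mul_of_nonneg_right ?_ (Complex.normSq_nonneg _)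
      have hj1 : 1 ≤ (j : ℕ) := Nat.one_le_iff_ne_zero.mpr (Fin.val_ne_zero_iff.mpr hj)
      have hsin0 : 0 ≤ sin (π / N) := sin_nonneg_of_nonneg_of_le_pi (by positivity)
        (div_le_self pi_pos.le (Nat.one_le_cast.mpr NeZero.one_le))
      rw [normSq_one_sub_exp_pow]
      gcongr
      exact sin_pi_div_le_sin_pi_mul_div hj1 j.isLt
  have hsum := sum_le_sum fun j (_ : j ∈ univ) => hmode j
  rw [← mul_sum, hζ.sum_normSq_dft] at hsum
  simp only [← normSq_dft_sub hζ.pow_eq_one] at hsum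
  rw [hζ.sum_normSq_dft, mul_left_comm] at hsum
  exact le_of_mul_le_mul_left hsum hN

end DiscreteFourier

section Laplacian

variable {N : ℕ} [NeZero N]

theorem Kdisc_apply (μ : ℝ) (k l : Fin N) :
    Kdisc μ N k l = μ / (4 * sin (π / N) ^ 2) *
      ((if l = k then 2 else 0) - (if l = k + 1 then 1 else 0) - (if l = k - 1 then 1 else 0)) := by
  have hN : 0 < N := Nat.pos_of_neZero N
  have hsucc : (l : ℕ) = ((k : ℕ) + 1) % N ↔ l = k + 1 := by
    rw [Fin.ext_iff, Fin.val_add, Fin.val_one', Nat.add_mod_mod]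
  have hpred : (l : ℕ) = ((k : ℕ) + (N - 1)) % N ↔ l = k - 1 := by
    rw [Fin.ext_iff, Fin.sub_def, Fin.val_one']
    rcases Nat.lt_or_ge 1 N with h | h
    · rw [Nat.mod_eq_of_lt h, Nat.add_comm]
    · obtain rfl : N = 1 := by omega
      simp
  simp only [Kdisc, Matrix.of_apply, hsucc, hpred]

theorem Kdisc_transpose (μ : ℝ) : (Kdisc μ N)ᵀ = Kdisc μ N := by
  ext k l
  have hsucc : k = l + 1 ↔ l = k - 1 := eq_comm.trans eq_sub_iff_add_eq.symm
  have hpred : k = l - 1 ↔ l = k + 1 := eq_sub_iff_add_eq.trans eq_comm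
  simp only [Matrix.transpose_apply, Kdisc_apply, hsucc, hpred, eq_comm (a := k)]
  ring

theorem Kdisc_mulVec_apply (μ : ℝ) (y : Fin N → ℝ) (k : Fin N) :
    (Kdisc μ N *ᵥ y) k = μ / (4 * sin (π / N) ^ 2) * (2 * y k - y (k + 1) - y (k - 1)) := by
  simp only [Matrix.mulVec, dotProduct, Kdisc_apply, mul_assoc, ← mul_sum, sub_mul, ite_mul,
    zero_mul, sum_sub_distrib, sum_ite_eq', mem_univ, if_true]
  ring

theorem Kdisc_mulVec_const (μ c : ℝ) : Kdisc μ N *ᵥ (fun _ => c) = 0 := by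
  ext k
  simp only [Kdisc_mulVec_apply, Pi.zero_apply]
  ring

theorem dotProduct_Kdisc_mulVec (μ : ℝ) (y : Fin N → ℝ) :
    y ⬝ᵥ (Kdisc μ N *ᵥ y) = μ / (4 * sin (π / N) ^ 2) * ∑ k, (y (k + 1) - y k) ^ 2 := by
  have hshift : ∑ k, y (k + 1) * (y (k + 1) - y (k + 1 - 1)) = ∑ k, y k * (y k - y (k - 1)) :=
    Equiv.sum_comp (Equiv.addRight 1) fun k => y k * (y k - y (k - 1))
  have hsq : ∑ k, (y (k + 1) - y k) ^ 2 = ∑ k, y k * (2 * y k - y (k + 1) - y (k - 1)) := by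
    calc ∑ k, (y (k + 1) - y k) ^ 2
        = ∑ k, (y (k + 1) * (y (k + 1) - y (k + 1 - 1)) + y k * (y k - y (k + 1))) := by
          simp only [add_sub_cancel_right]
          exact sum_congr rfl fun k _ => by ring
      _ = ∑ k, y k * (2 * y k - y (k + 1) - y (k - 1)) := by
          rw [sum_add_distrib, hshift, ← sum_add_distrib]
          exact sum_congr rfl fun k _ => by ring
  simp only [dotProduct, Kdisc_mulVec_apply, hsq, mul_sum]
  exact sum_congr rfl fun k _ => by ring

theorem Kdisc_spectral_gap {μ : ℝ} (hμ : 0 ≤ μ) (hN : 2 ≤ N) (y : Fin N → ℝ) (hy : ∑ k, y k = 0) :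
    μ * (y ⬝ᵥ y) ≤ y ⬝ᵥ (Kdisc μ N *ᵥ y) := by
  have hsin : sin (π / N) ≠ 0 := by
    refine (sin_pos_of_pos_of_lt_pi (by positivity) ?_).ne'
    exact div_lt_self pi_pos (by exact_mod_cast hN)
  rw [dotProduct_Kdisc_mulVec]
  calc μ * (y ⬝ᵥ y) = μ / (4 * sin (π / N) ^ 2) * (4 * sin (π / N) ^ 2 * ∑ k, y k ^ 2) := by
        rw [← mul_assoc, div_mul_cancel₀ _ (by positivity)]
        simp only [dotProduct, sq]
    _ ≤ _ := by
        gcongr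
        exact discrete_wirtinger y hy

end Laplacian

section Gradient

variable {n : Type*} [Fintype n]

theorem hasFDerivAt_sum_pow_four (x : n → ℝ) :
    HasFDerivAt (fun y : n → ℝ => ∑ k, y k ^ 4)
      (∑ k, (4 * x k ^ 3) • (ContinuousLinearMap.proj k : (n → ℝ) →L[ℝ] ℝ)) x := by
  refine (HasFDerivAt.fun_sum fun k _ => (hasFDerivAt_apply k x).pow 4).congr_fderiv ?_
  ext w
  simp

theorem hasFDerivAt_dotProduct_mulVec (A : Matrix n n ℝ) (x : n → ℝ) :
    HasFDerivAt (fun y => y ⬝ᵥ (A *ᵥ y))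
      (∑ k, ((A + Aᵀ) *ᵥ x) k • (ContinuousLinearMap.proj k : (n → ℝ) →L[ℝ] ℝ)) x := by
  have hA (k : n) : HasFDerivAt (fun y => (A *ᵥ y) k)
      ((ContinuousLinearMap.proj k : (n → ℝ) →L[ℝ] ℝ).comp
        (LinearMap.toContinuousLinearMap A.mulVecLin)) x :=
    ((ContinuousLinearMap.proj k : (n → ℝ) →L[ℝ] ℝ).comp
        (LinearMap.toContinuousLinearMap A.mulVecLin)).hasFDerivAt
  refine (HasFDerivAt.fun_sum fun k _ => (hasFDerivAt_apply k x).mul (hA k)).congr_fderiv ?_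
  ext w
  simp only [_root_.sum_apply, _root_.add_apply, _root_.smul_apply, ContinuousLinearMap.comp_apply,
    LinearMap.coe_toContinuousLinearMap', Matrix.mulVecLin_apply, ContinuousLinearMap.proj_apply,
    smul_eq_mul, sum_add_distrib]
  change x ⬝ᵥ (A *ᵥ w) + (A *ᵥ x) ⬝ᵥ w = ((A + Aᵀ) *ᵥ x) ⬝ᵥ w
  rw [Matrix.dotProduct_mulVec, ← Matrix.mulVec_transpose, Matrix.add_mulVec, add_dotProduct,
    add_comm]

theorem Venergy_eq_dotProduct (μ : ℝ) (N : ℕ) : Venergy μ N = fun y : Fin N → ℝ =>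
    (1 / 4 : ℝ) * ∑ k, y k ^ 4 + (1 / 2) * (y ⬝ᵥ ((Kdisc μ N - 1) *ᵥ y)) + (N : ℝ) / 4 := by
  funext y
  simp [Venergy, Matrix.sub_mulVec, dotProduct]

theorem pgrad_Venergy {N : ℕ} [NeZero N] (μ : ℝ) (x : Fin N → ℝ) (k : Fin N) :
    pgrad N (Venergy μ N) x k = x k ^ 3 + (Kdisc μ N *ᵥ x) k - x k := by
  have h := (((hasFDerivAt_sum_pow_four x).const_mul (1 / 4 : ℝ)).fun_add
    ((hasFDerivAt_dotProduct_mulVec (Kdisc μ N - 1) x).const_mul (1 / 2 : ℝ))).add_const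
    ((N : ℝ) / 4)
  rw [pgrad, Venergy_eq_dotProduct, h.fderiv]
  simp [Matrix.transpose_sub, Kdisc_transpose, Pi.single_apply, Matrix.add_mulVec,
    Matrix.sub_mulVec]
  ring

end Gradient

theorem exists_eq_const_of_cube_add_mulVec_sub_eq_zero {ι : Type*} [Fintype ι] [Nonempty ι]
    {A : Matrix ι ι ℝ} {μ : ℝ} (hμ : 1 < μ) (hA : A *ᵥ (fun _ => 1) = 0)
    (hgap : ∀ y : ι → ℝ, ∑ i, y i = 0 → μ * (y ⬝ᵥ y) ≤ y ⬝ᵥ (A *ᵥ y)) {x : ι → ℝ}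
    (hx : ∀ i, x i ^ 3 + (A *ᵥ x) i - x i = 0) : ∃ c : ℝ, x = fun _ => c := by
  set m := (∑ i, x i) / Fintype.card ι
  set y : ι → ℝ := fun i => x i - m
  have hy : ∑ i, y i = 0 := by
    simp only [y, sum_sub_distrib, sum_const, card_univ, nsmul_eq_mul, m]
    field_simp
    ring
  have hAx : A *ᵥ x = A *ᵥ y := by
    have hsplit : x = y + m • fun _ => 1 := by ext; simp [y]
    rw [hsplit, Matrix.mulVec_add, Matrix.mulVec_smul, hA, smul_zero, add_zero]
  have hcube (i : ι) : 0 ≤ (x i ^ 3 - m ^ 3) * y i := by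
    nlinarith [mul_nonneg (sq_nonneg (x i - m))
      (add_nonneg (add_nonneg (sq_nonneg (x i)) (sq_nonneg m)) (sq_nonneg (x i + m)))]
  have hpair : ∑ i, (x i ^ 3 - m ^ 3) * y i + y ⬝ᵥ (A *ᵥ y) - y ⬝ᵥ y = 0 := by
    calc _ = ∑ i, (x i ^ 3 + (A *ᵥ x) i - x i) * y i + (m - m ^ 3) * ∑ i, y i := by
          simp only [dotProduct, hAx, mul_sum, ← sum_add_distrib, ← sum_sub_distrib]
          exact sum_congr rfl fun i _ => by simp only [y]; ring
      _ = 0 := by simp [hx, hy]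
  have hyy : y ⬝ᵥ y = 0 := by
    have hyy_nonneg : 0 ≤ y ⬝ᵥ y := sum_nonneg fun i _ => mul_self_nonneg (y i)
    nlinarith [hgap y hy, sum_nonneg fun i (_ : i ∈ univ) => hcube i]
  refine ⟨m, funext fun i => ?_⟩
  simpa [y, sub_eq_zero] using congr_fun (dotProduct_self_eq_zero.mp hyy) i

/-- the only critical points of `V` are `O = 0`, `I₊ = (1,…,1)`
and `I₋ = (−1,…,−1)`: the gradient `∇V(x)` vanishes iff `x ∈ {O, I₊, I₋}`. -/
theorem critical_points_of_V (μ : ℝ) (hμ : 1 < μ) (N : ℕ) (hN : 2 ≤ N)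
    (x : Fin N → ℝ) :
    (∀ k, pgrad N (Venergy μ N) x k = 0) ↔
      (x = fun _ => 0) ∨ (x = fun _ => 1) ∨ (x = fun _ => -1) := by
  have : NeZero N := ⟨by omega⟩
  simp only [pgrad_Venergy]
  constructor
  · intro hx
    obtain ⟨c, rfl⟩ := exists_eq_const_of_cube_add_mulVec_sub_eq_zero hμ (Kdisc_mulVec_const μ 1)
      (Kdisc_spectral_gap (by linarith) hN) hx
    have hcube : c ^ 3 - c = 0 := by simpa [Kdisc_mulVec_const] using hx 0
    have hroots : c * ((c - 1) * (c + 1)) = 0 := by linear_combination hcube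
    obtain rfl | rfl | rfl : c = 0 ∨ c = 1 ∨ c = -1 := by
      simpa [sub_eq_zero, add_eq_zero_iff_eq_neg] using hroots
    all_goals simp
  · rintro (rfl | rfl | rfl) k <;> norm_num [Kdisc_mulVec_const]
end

section
/- As N → ∞, the ratio (det(K_N + 2I)/|det(K_N − I)|)^{1/2} converges to sinh(π√(2/μ)) / sin(π√(1/μ)). Equivalently, since det(K_N + 2I) = det Hess V(I₊) = det Hess V(I₋) and det(K_N − I) = det Hess V(O), one has (det Hess V(I₊)/|det Hess V(O)|)^{1/2} → sinh(π√(2/μ))/sin(π√(1/μ)). -/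
/-!
`K_N + a I` is circulant, with eigenvalues `c (2 - w - w⁻¹) + a` at the `N`-th roots of
unity `w`, where `c = μ / (4 sin² (π / N))`. Writing `a + 2c = c (x + x⁻¹)`, each eigenvalue
factors as `c x⁻¹ (x - w) (x - w⁻¹)`, so `det (K_N + a I) = c^N (x^N - 1)² / x^N`. With
`x = exp (2t)`, `a = 4c sinh² t` this is `4 c^N sinh² (N t)`; with `x = exp (2is)`,
`a = -4c sin² s` it is `-4 c^N sin² (N s)`. For `a = 2` and `a = -1` the factor `c^N` cancels
in the ratio, which becomes `|sinh (N t_N) / sin (N s_N)|` with `sinh t_N = √(2/μ) sin (π/N)`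
and `sin s_N = √(1/μ) sin (π/N)`. Since `arsinh` and `arcsin` have slope `1` at `0`,
`N t_N → π √(2/μ)` and `N s_N → π √(1/μ)`.
-/

open Real MeasureTheory Matrix Filter

lemma pow_finVal_add {M : Type*} [Monoid M] {N : ℕ} {w : M} (hw : w ^ N = 1) (a b : Fin N) :
    w ^ ((a + b : Fin N) : ℕ) = w ^ (a : ℕ) * w ^ (b : ℕ) := by
  rw [Fin.val_add, ← pow_eq_pow_mod _ hw, pow_add]

lemma pow_finVal_neg {M : Type*} [DivisionMonoid M] {N : ℕ} [NeZero N] {w : M}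
    (hw : w ^ N = 1) (a : Fin N) : w ^ ((-a : Fin N) : ℕ) = (w ^ (a : ℕ))⁻¹ :=
  eq_inv_of_mul_eq_one_left <| by
    rw [← pow_finVal_add hw, neg_add_cancel, Fin.val_zero, pow_zero]

lemma Fin.val_add_one_eq_mod {N : ℕ} [NeZero N] (k : Fin N) :
    ((k + 1 : Fin N) : ℕ) = ((k : ℕ) + 1) % N := by
  rw [Fin.val_add, Fin.val_one', Nat.add_mod_mod]

lemma Fin.val_sub_one_eq_mod {N : ℕ} [NeZero N] (k : Fin N) :
    ((k - 1 : Fin N) : ℕ) = ((k : ℕ) + (N - 1)) % N := by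
  obtain rfl | hN : N = 1 ∨ 1 < N := by have := NeZero.pos N; omega
  · simp [Fin.val_eq_zero]
  · rw [Fin.sub_def, Fin.val_one', Nat.mod_eq_of_lt hN, Nat.add_comm]

lemma Complex.sinh_eq_exp (z : ℂ) : sinh z = (exp z - (exp z)⁻¹) / 2 := by
  rw [← exp_neg]
  linear_combination two_sinh z / 2

open Polynomial in
lemma IsPrimitiveRoot.prod_sub_pow {R : Type*} [CommRing R] [IsDomain R] {N : ℕ} [NeZero N]
    {ζ : R} (hζ : IsPrimitiveRoot ζ N) (x : R) :
    ∏ k : Fin N, (x - ζ ^ (k : ℕ)) = x ^ N - 1 := by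
  have := congrArg (eval x) (X_pow_sub_C_eq_prod hζ (Nat.pos_of_neZero N) (one_pow N))
  simpa [eval_prod, Fin.prod_univ_eq_prod_range (fun k => x - ζ ^ k)] using this.symm

namespace Matrix

section Circulant

variable {R : Type*} [CommRing R] [IsDomain R] {N : ℕ} [NeZero N]

/-- The columns `j ↦ ζ ^ (j k)` of the Vandermonde matrix of the `N`-th roots of unity are
eigenvectors of every circulant matrix. -/
theorem det_circulant {ζ : R} (hζ : IsPrimitiveRoot ζ N) (v : Fin N → R) :
    (circulant v).det =
      ∏ k : Fin N, ∑ m : Fin N, v m * (ζ ^ (k : ℕ)) ^ ((-m : Fin N) : ℕ) := by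
  set F := vandermonde fun i : Fin N => ζ ^ (i : ℕ) with hF_def
  have hF : F.det ≠ 0 := det_vandermonde_ne_zero_iff.mpr fun i j hij =>
    Fin.ext (hζ.pow_inj i.isLt j.isLt hij)
  suffices circulant v * F =
      F * diagonal fun k : Fin N => ∑ m : Fin N, v m * (ζ ^ (k : ℕ)) ^ ((-m : Fin N) : ℕ) by
    have := congrArg det this
    rw [det_mul, det_mul, det_diagonal, mul_comm] at this
    exact mul_left_cancel₀ hF this
  ext i k
  have hw : (ζ ^ (k : ℕ)) ^ N = 1 := by
    rw [← pow_mul, mul_comm, pow_mul, hζ.pow_eq_one, one_pow]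
  have hF_apply (j : Fin N) : F j k = (ζ ^ (k : ℕ)) ^ (j : ℕ) := by
    rw [hF_def, vandermonde_apply, ← pow_mul, ← pow_mul, mul_comm]
  rw [mul_apply, mul_diagonal, hF_apply, Finset.mul_sum, ← (Equiv.subLeft i).sum_comp]
  refine Finset.sum_congr rfl fun m _ => ?_
  rw [Equiv.subLeft_apply, circulant_apply, sub_sub_cancel, hF_apply, sub_eq_add_neg,
    pow_finVal_add hw]
  ring

end Circulant

section CyclicTridiag

variable {K : Type*} [Field K] {N : ℕ} [NeZero N]

/-- The first column of the circulant matrix with `b` on the diagonal and `-c` on both cyclic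
off-diagonals; for `N ≤ 2` these off-diagonals coincide and their entries add up. -/
def cyclicTridiag (N : ℕ) [NeZero N] (b c : K) : Fin N → K :=
  fun m => (if m = 0 then b else 0) - (if m = 1 then c else 0) - (if m = -1 then c else 0)

lemma map_cyclicTridiag {L : Type*} [Field L] (f : K →+* L) (b c : K) :
    (fun m => f (cyclicTridiag N b c m)) = cyclicTridiag N (f b) (f c) := by
  funext m
  simp only [cyclicTridiag, map_sub, apply_ite f, map_zero]

lemma sum_cyclicTridiag_mul_pow {w : K} (hw : w ^ N = 1) (b c : K) :
    ∑ m : Fin N, cyclicTridiag N b c m * w ^ ((-m : Fin N) : ℕ) = b - c * (w + w⁻¹) := by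
  have hw1 : w ^ ((1 : Fin N) : ℕ) = w := by
    rw [Fin.val_one', ← pow_eq_pow_mod _ hw, pow_one]
  simp only [cyclicTridiag, sub_mul, ite_mul, zero_mul, Finset.sum_sub_distrib,
    Finset.sum_ite_eq', Finset.mem_univ, if_true, Fin.val_zero, pow_zero, pow_finVal_neg hw,
    hw1, inv_inv]
  ring

theorem det_circulant_cyclicTridiag {ζ : K} (hζ : IsPrimitiveRoot ζ N) {c x : K} (hx : x ≠ 0) :
    (circulant (cyclicTridiag N (c * (x + x⁻¹)) c)).det = c ^ N * (x ^ N - 1) ^ 2 / x ^ N := by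
  have hζN : ζ ^ N = 1 := hζ.pow_eq_one
  have hζ0 : ζ ≠ 0 := hζ.ne_zero (NeZero.ne N)
  have hroot (k : Fin N) : (ζ ^ (k : ℕ)) ^ N = 1 := by
    rw [← pow_mul, mul_comm, pow_mul, hζN, one_pow]
  have hfactor {w : K} (hw : w ≠ 0) :
      c * (x + x⁻¹) - c * (w + w⁻¹) = c / x * (x - w) * (x - w⁻¹) := by
    field_simp
    ring
  have hprod_inv : ∏ k : Fin N, (x - (ζ ^ (k : ℕ))⁻¹) = x ^ N - 1 := by
    rw [← hζ.prod_sub_pow x]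
    exact Fintype.prod_equiv (Equiv.neg (Fin N)) _ _ fun k => by
      rw [Equiv.neg_apply, pow_finVal_neg hζN]
  rw [det_circulant hζ, Finset.prod_congr rfl fun k _ => by
    rw [sum_cyclicTridiag_mul_pow (hroot k), hfactor (pow_ne_zero _ hζ0)]]
  simp only [Finset.prod_mul_distrib, Finset.prod_const, Finset.card_univ, Fintype.card_fin,
    hζ.prod_sub_pow, hprod_inv]
  ring

end CyclicTridiag

theorem det_circulant_cyclicTridiag_sinh (N : ℕ) [NeZero N] (c z : ℂ) :
    (circulant (cyclicTridiag N (4 * c * Complex.sinh z ^ 2 + 2 * c) c)).det =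
      4 * c ^ N * Complex.sinh (N * z) ^ 2 := by
  have hE : Complex.exp z ≠ 0 := Complex.exp_ne_zero z
  have hdiag : 4 * c * Complex.sinh z ^ 2 + 2 * c =
      c * (Complex.exp z ^ 2 + (Complex.exp z ^ 2)⁻¹) := by
    rw [Complex.sinh_eq_exp]
    field_simp
    ring
  rw [hdiag, det_circulant_cyclicTridiag (Complex.isPrimitiveRoot_exp N (NeZero.ne N))
    (pow_ne_zero 2 hE), Complex.sinh_eq_exp, Complex.exp_nat_mul]
  field_simp
  ring

end Matrix

lemma Kdisc_add_smul_one_eq_circulant (μ a : ℝ) (N : ℕ) [NeZero N] :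
    Kdisc μ N + a • 1 = circulant (cyclicTridiag N (a + 2 * (μ / (4 * sin (π / N) ^ 2)))
      (μ / (4 * sin (π / N) ^ 2))) := by
  ext k l
  have h_eq : k = l ↔ k - l = 0 := sub_eq_zero.symm
  have h_succ : (l : ℕ) = ((k : ℕ) + 1) % N ↔ k - l = -1 := by
    rw [← Fin.val_add_one_eq_mod, ← Fin.ext_iff, ← neg_sub, neg_inj, sub_eq_iff_eq_add']
  have h_pred : (l : ℕ) = ((k : ℕ) + (N - 1)) % N ↔ k - l = 1 := by
    rw [← Fin.val_sub_one_eq_mod, ← Fin.ext_iff, eq_sub_iff_add_eq, sub_eq_iff_eq_add', eq_comm]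
  simp only [Kdisc, cyclicTridiag, Matrix.add_apply, Matrix.smul_apply, one_apply, of_apply,
    circulant_apply, smul_eq_mul, @eq_comm _ l k, h_eq, h_succ, h_pred]
  split_ifs <;> ring

theorem ofReal_det_Kdisc_add_smul_one (μ a : ℝ) (N : ℕ) [NeZero N] {z : ℂ}
    (ha : (a : ℂ) = 4 * (μ / (4 * sin (π / N) ^ 2) : ℝ) * Complex.sinh z ^ 2) :
    ((Kdisc μ N + a • 1).det : ℂ) =
      4 * ((μ / (4 * sin (π / N) ^ 2) : ℝ) : ℂ) ^ N * Complex.sinh (N * z) ^ 2 := by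
  rw [Kdisc_add_smul_one_eq_circulant, ← Complex.ofRealHom_eq_coe, RingHom.map_det,
    RingHom.mapMatrix_apply, map_circulant, map_cyclicTridiag, map_add, map_mul, map_ofNat,
    Complex.ofRealHom_eq_coe, ha]
  exact det_circulant_cyclicTridiag_sinh N _ z

theorem det_Kdisc_add_smul_one_of_sinh (μ a t : ℝ) (N : ℕ) [NeZero N]
    (ha : a = 4 * (μ / (4 * sin (π / N) ^ 2)) * sinh t ^ 2) :
    (Kdisc μ N + a • 1).det = 4 * (μ / (4 * sin (π / N) ^ 2)) ^ N * sinh (N * t) ^ 2 := by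
  apply Complex.ofReal_injective
  rw [ofReal_det_Kdisc_add_smul_one μ a N (z := t) (by rw [ha]; push_cast; ring)]
  push_cast
  ring

theorem det_Kdisc_sub_smul_one_of_sin (μ a s : ℝ) (N : ℕ) [NeZero N]
    (ha : a = 4 * (μ / (4 * sin (π / N) ^ 2)) * sin s ^ 2) :
    (Kdisc μ N - a • 1).det = -(4 * (μ / (4 * sin (π / N) ^ 2)) ^ N * sin (N * s) ^ 2) := by
  apply Complex.ofReal_injective
  have hsinh (x : ℝ) : Complex.sinh (x * Complex.I) ^ 2 = -(Real.sin x : ℂ) ^ 2 := by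
    rw [Complex.sinh_mul_I, mul_pow, Complex.I_sq, Complex.ofReal_sin]
    ring
  rw [sub_eq_add_neg, ← neg_smul, ofReal_det_Kdisc_add_smul_one μ (-a) N (z := s * Complex.I)
    (by rw [hsinh, ha]; push_cast; ring), ← mul_assoc, ← Complex.ofReal_natCast,
    ← Complex.ofReal_mul, hsinh]
  push_cast
  ring

lemma sin_pi_div_pos {N : ℕ} (hN : 2 ≤ N) : 0 < sin (π / N) :=
  sin_pos_of_pos_of_lt_pi (by positivity) (div_lt_self pi_pos (by exact_mod_cast hN))

lemma sqrt_det_Kdisc_ratio_eq {μ : ℝ} (hμ : 1 ≤ μ) {N : ℕ} (hN : 2 ≤ N) :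
    √((Kdisc μ N + 2).det / |(Kdisc μ N - 1).det|) =
      |sinh (N * arsinh (√(2 / μ) * sin (π / N))) /
        sin (N * arcsin (√(1 / μ) * sin (π / N)))| := by
  have : NeZero N := ⟨by omega⟩
  have hsin := sin_pi_div_pos hN
  have hμ0 : 0 < μ := by linarith
  have hc : 0 < μ / (4 * sin (π / N) ^ 2) := by positivity
  have harcsin : sin (arcsin (√(1 / μ) * sin (π / N))) = √(1 / μ) * sin (π / N) := by
    have hsqrt : √(1 / μ) ≤ 1 := sqrt_le_one.mpr ((div_le_one hμ0).mpr hμ)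
    exact sin_arcsin (by nlinarith [sqrt_nonneg (1 / μ)])
      (by nlinarith [sqrt_nonneg (1 / μ), sin_le_one (π / N)])
  have hplus := det_Kdisc_add_smul_one_of_sinh μ 2 (arsinh (√(2 / μ) * sin (π / N))) N (by
    rw [sinh_arsinh, mul_pow, sq_sqrt (by positivity)]
    field_simp)
  have hminus := det_Kdisc_sub_smul_one_of_sin μ 1 (arcsin (√(1 / μ) * sin (π / N))) N (by
    rw [harcsin, mul_pow, sq_sqrt (by positivity)]
    field_simp)
  rw [two_smul, one_add_one_eq_two] at hplus
  rw [one_smul] at hminus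
  rw [hplus, hminus, abs_neg, abs_of_nonneg (by positivity), mul_div_mul_left _ _ (by positivity),
    ← div_pow, sqrt_sq_eq_abs]

open Topology

theorem tendsto_mul_comp_of_hasDerivAt {α : Type*} {l : Filter α} {g : ℝ → ℝ} {g' L : ℝ}
    {r u : α → ℝ} (hg : HasDerivAt g g' 0) (hg0 : g 0 = 0) (hu : Tendsto u l (𝓝[≠] 0))
    (hru : Tendsto (fun n => r n * u n) l (𝓝 L)) :
    Tendsto (fun n => r n * g (u n)) l (𝓝 (L * g')) := by
  -- `r * g u = (r * u) * slope g 0 u` holds even at `u = 0`, where both sides vanish.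
  refine (hru.mul (hg.tendsto_slope.comp hu)).congr fun n => ?_
  rcases eq_or_ne (u n) 0 with hun | hun
  · simp [hun, hg0]
  · simp only [Function.comp_apply, slope_def_field, hg0, sub_zero]
    field_simp

lemma tendsto_pi_div_nhdsNE : Tendsto (fun N : ℕ => π / N) atTop (𝓝[≠] 0) :=
  tendsto_nhdsWithin_iff.mpr ⟨tendsto_const_div_atTop_nhds_zero_nat π,
    eventually_atTop.mpr ⟨1, fun N hN => (div_pos pi_pos (by exact_mod_cast hN)).ne'⟩⟩

lemma tendsto_nat_mul_sin_pi_div : Tendsto (fun N : ℕ => N * sin (π / N)) atTop (𝓝 π) := by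
  have hπ : Tendsto (fun N : ℕ => (N : ℝ) * (π / N)) atTop (𝓝 π) :=
    tendsto_const_nhds.congr' <| eventually_atTop.mpr ⟨1, fun N hN => by field_simp⟩
  simpa using tendsto_mul_comp_of_hasDerivAt (g' := 1) (by simpa using hasDerivAt_sin 0)
    sin_zero tendsto_pi_div_nhdsNE hπ

lemma tendsto_nat_mul_comp_mul_sin_pi_div {g : ℝ → ℝ} (hg : HasDerivAt g 1 0) (hg0 : g 0 = 0)
    {b : ℝ} (hb : b ≠ 0) :
    Tendsto (fun N : ℕ => N * g (b * sin (π / N))) atTop (𝓝 (π * b)) := by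
  have hu : Tendsto (fun N : ℕ => b * sin (π / N)) atTop (𝓝[≠] 0) := by
    refine tendsto_nhdsWithin_iff.mpr ⟨?_, eventually_atTop.mpr ⟨2, fun N hN =>
      mul_ne_zero hb (sin_pi_div_pos hN).ne'⟩⟩
    simpa using ((continuous_sin.tendsto 0).comp
      (tendsto_nhds_of_tendsto_nhdsWithin tendsto_pi_div_nhdsNE)).const_mul b
  have hru : Tendsto (fun N : ℕ => N * (b * sin (π / N))) atTop (𝓝 (b * π)) := by
    simpa [mul_left_comm] using tendsto_nat_mul_sin_pi_div.const_mul b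
  simpa [mul_comm] using tendsto_mul_comp_of_hasDerivAt hg hg0 hu hru

/-- convergence of the ratio of determinants:
`(det(K_N + 2I)/|det(K_N − I)|)^{1/2} → sinh(π√(2/μ))/sin(π√(1/μ))` as `N → ∞`. -/
theorem det_ratio_tendsto (μ : ℝ) (hμ : 1 < μ) :
    Filter.Tendsto
      (fun N : ℕ => Real.sqrt ((Kdisc μ N + 2).det / |(Kdisc μ N - 1).det|))
      Filter.atTop
      (nhds (Real.sinh (Real.pi * Real.sqrt (2 / μ)) /
        Real.sin (Real.pi * Real.sqrt (1 / μ)))) := by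
  have hμ0 : 0 < μ := by linarith
  have hsqrt_lt : √(1 / μ) < 1 :=
    (sqrt_lt' one_pos).mpr (by rw [one_pow, div_lt_one hμ0]; exact hμ)
  have hsinh := (continuous_sinh.tendsto _).comp <| tendsto_nat_mul_comp_mul_sin_pi_div
    (by simpa using hasDerivAt_arsinh 0) arsinh_zero (sqrt_pos.mpr (by positivity : 0 < 2 / μ)).ne'
  have hsin := (continuous_sin.tendsto _).comp <| tendsto_nat_mul_comp_mul_sin_pi_div
    (by simpa using hasDerivAt_arcsin (x := 0) (by norm_num) (by norm_num)) arcsin_zero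
    (sqrt_pos.mpr (by positivity : 0 < 1 / μ)).ne'
  have hsin_pos : 0 < sin (π * √(1 / μ)) :=
    sin_pos_of_pos_of_lt_pi (by positivity) (mul_lt_of_lt_one_right pi_pos hsqrt_lt)
  have hsinh_pos : 0 < sinh (π * √(2 / μ)) := sinh_pos_iff.mpr (by positivity)
  have hratio := (hsinh.div hsin hsin_pos.ne').abs
  rw [abs_of_pos (div_pos hsinh_pos hsin_pos)] at hratio
  refine hratio.congr' (eventually_atTop.mpr ⟨2, fun N hN => ?_⟩)
  exact (sqrt_det_Kdisc_ratio_eq hμ.le hN).symm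
end

section
/- Let α ∈ (1/(3(2−√2)² + 1), 1). Then there exists n₀ ∈ ℕ such that for every β > 0, every integer n ≥ n₀, and every even function θ ∈ C²(ℝ; [0,1]) satisfying θ ≡ 1 on [−1,1], θ ≡ 0 outside [−√2, √2], θ'(r) ≤ 0 for r ≥ 0, and θ''(r) ≥ −(2/(√2−1)²)(1 + 1/n) for all r ∈ ℝ, there exists a constant C_{α,β,n} > 0 such that, defining c := √((1−α)/(1+β)) and W(x) := Σ_{k=1}^N θ(c x_k)·( −((1−α)/4) x_k⁴ + ((1+β)/2) x_k² ) − N/4, one has for every integer N ≥ 2, every x ∈ ℝ^N and every w ∈ ℝ^N: ⟨w, Hess(V + W)(x) w⟩ ≥ C_{α,β,n} ‖w‖². -/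
open Real MeasureTheory Matrix Filter

/-!
`V + W` splits as `∑ k, g (x k) + ⟪x, K x⟫ / 2` with the single-site potential
`g t = t⁴/4 - t²/2 + θ (c t) (-(1-α) t⁴/4 + (1+β) t²/2)`, so its Hessian form is
`∑ k, g'' (x k) w k² + ⟪w, K w⟫`, and `⟪w, K w⟫ ≥ 0` since it is a positive multiple of
`∑ k, (w k - w (k+1))²`. It remains to show `g'' ≥ min β 1`. Where `θ (c t) = 1`,
`g'' t = 3 α t² + β`; where `θ (c t) = 0`, `g'' t = 3 t² - 1 ≥ 5`. On the transition region
`1 ≤ s := c² t² ≤ 2` the `θ'`-term has a good sign (`θ'` is odd and `≤ 0` on `[0, ∞)`), and the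
other terms add up to at least `β + s (1+β) (3α/(1-α) - κ/4)`, where `κ = 2 (1+1/n)/(√2-1)²`
bounds `-θ''`. This is nonnegative once `κ (1-α) ≤ 12 α`, which holds for all large `n` because
`α > 1/(3(2-√2)²+1)`.
-/

open Filter Topology

theorem hasFDerivAt_sum_apply {N : ℕ} {g g' : Fin N → ℝ → ℝ}
    (hg : ∀ k t, HasDerivAt (g k) (g' k t) t) (y : Fin N → ℝ) :
    HasFDerivAt (fun y : Fin N → ℝ => ∑ k, g k (y k))
      (∑ k, g' k (y k) • ContinuousLinearMap.proj (R := ℝ) (φ := fun _ : Fin N => ℝ) k) y :=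
  HasFDerivAt.fun_sum fun k _ => (hg k (y k)).comp_hasFDerivAt y (hasFDerivAt_apply k y)

theorem hessQF_sum_comp_add_dotProduct_mulVec {N : ℕ} (A : Matrix (Fin N) (Fin N) ℝ)
    {g g' g'' : ℝ → ℝ} (hg : ∀ t, HasDerivAt g (g' t) t) (hg' : ∀ t, HasDerivAt g' (g'' t) t)
    (x w : Fin N → ℝ) :
    hessQF N (fun y => ∑ k, g (y k) + (1 / 2) * (y ⬝ᵥ A *ᵥ y)) x w
      = ∑ k, g'' (x k) * w k ^ 2 + w ⬝ᵥ A *ᵥ w := by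
  set B : (Fin N → ℝ) →L[ℝ] (Fin N → ℝ) →L[ℝ] ℝ :=
    (Matrix.toLinearMap₂' ℝ A).toContinuousBilinearMap
  have hB : ∀ u v, u ⬝ᵥ A *ᵥ v = B u v := fun u v => by
    simp [B, LinearMap.toContinuousBilinearMap_apply, Matrix.toLinearMap₂'_apply']
  have hD : ∀ y, fderiv ℝ (fun y => ∑ k, g (y k) + (1 / 2) * (y ⬝ᵥ A *ᵥ y)) y w
      = ∑ k, g' (y k) * w k + (1 / 2) * (B y w + B w y) := by
    intro y
    have h : HasFDerivAt (fun y => ∑ k, g (y k) + (1 / 2) * B y y) _ y :=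
      (hasFDerivAt_sum_apply (fun _ => hg) y).fun_add
        ((B.hasFDerivAt_of_bilinear (hasFDerivAt_id y) (hasFDerivAt_id y)).const_mul (1 / 2))
    simp_rw [hB, h.fderiv]
    simp [mul_comm, mul_add]
  have h : HasFDerivAt (fun y => ∑ k, g' (y k) * w k + (1 / 2) * (B y w + B w y)) _ x :=
    (hasFDerivAt_sum_apply (fun k t => (hg' t).mul_const (w k)) x).fun_add
      (((B.hasFDerivAt_of_bilinear (hasFDerivAt_id x) (hasFDerivAt_const w x)).fun_add
        (B.hasFDerivAt_of_bilinear (hasFDerivAt_const w x) (hasFDerivAt_id x))).const_mul (1 / 2))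
  simp_rw [hessQF, hD, h.fderiv]
  simp [hB, sq, mul_assoc, ← two_mul]

theorem Kdisc_mulVec {μ : ℝ} {N : ℕ} [NeZero N] (w : Fin N → ℝ) (k : Fin N) :
    (Kdisc μ N *ᵥ w) k =
      μ / (4 * Real.sin (π / N) ^ 2) * (2 * w k - w (k + 1) - w (k - 1)) := by
  have hsucc : ∀ l : Fin N, (l : ℕ) = ((k : ℕ) + 1) % N ↔ l = k + 1 := fun l => by
    rw [Fin.ext_iff, Fin.val_add, Fin.val_one', Nat.add_mod_mod]
  have hpred : ∀ l : Fin N, (l : ℕ) = ((k : ℕ) + (N - 1)) % N ↔ l = k - 1 := fun l => by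
    obtain ⟨n, rfl⟩ : ∃ n, N = n + 1 := ⟨N - 1, by have := NeZero.ne N; omega⟩
    rw [Fin.ext_iff, sub_eq_add_neg, Fin.val_add, Fin.coe_neg_one, Nat.add_sub_cancel]
  simp only [Kdisc, Matrix.mulVec, dotProduct, Matrix.of_apply, hsucc, hpred, sub_mul,
    ite_mul, zero_mul, one_mul, mul_assoc, ← Finset.mul_sum, Finset.sum_sub_distrib,
    Finset.sum_ite_eq']
  simp

theorem dotProduct_Kdisc_mulVec_self (μ : ℝ) {N : ℕ} [NeZero N] (w : Fin N → ℝ) :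
    w ⬝ᵥ Kdisc μ N *ᵥ w = μ / (4 * Real.sin (π / N) ^ 2) * ∑ k, (w k - w (k + 1)) ^ 2 := by
  have hshift : ∀ f : Fin N → ℝ, ∑ k, f (k + 1) = ∑ k, f k := fun f =>
    Fintype.sum_equiv (Equiv.addRight 1) _ _ fun _ => rfl
  have hsq := hshift (fun k => w k ^ 2)
  have hcross := hshift (fun k => w k * w (k - 1))
  simp only [add_sub_cancel_right] at hcross
  simp only [dotProduct, Kdisc_mulVec, mul_left_comm _ (μ / _), ← Finset.mul_sum]
  congr 1
  have : ∑ k, w k * (2 * w k - w (k + 1) - w (k - 1)) - ∑ k, (w k - w (k + 1)) ^ 2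
      = (∑ k, w k ^ 2 - ∑ k, w (k + 1) ^ 2) + (∑ k, w (k + 1) * w k - ∑ k, w k * w (k - 1)) := by
    simp only [← Finset.sum_sub_distrib, ← Finset.sum_add_distrib]
    exact Finset.sum_congr rfl fun k _ => by ring
  rwa [hsq, hcross, sub_self, sub_self, add_zero, sub_eq_zero] at this

theorem dotProduct_Kdisc_mulVec_self_nonneg {μ : ℝ} (hμ : 0 ≤ μ) {N : ℕ} [NeZero N]
    (w : Fin N → ℝ) : 0 ≤ w ⬝ᵥ Kdisc μ N *ᵥ w := by
  rw [dotProduct_Kdisc_mulVec_self]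
  exact mul_nonneg (by positivity) (Finset.sum_nonneg fun k _ => sq_nonneg _)

theorem HasDerivAt.comp_const_mul {f : ℝ → ℝ} {f' c t : ℝ} (hf : HasDerivAt f f' (c * t)) :
    HasDerivAt (fun t => f (c * t)) (c * f') t := by
  have h := hf.comp t ((hasDerivAt_id t).const_mul c)
  rwa [mul_one, mul_comm] at h

noncomputable def sitePotential (θ : ℝ → ℝ) (c a b t : ℝ) : ℝ :=
  t ^ 4 / 4 - t ^ 2 / 2 + θ (c * t) * (-a * t ^ 4 + b * t ^ 2)

noncomputable def sitePotential' (θ : ℝ → ℝ) (c a b t : ℝ) : ℝ :=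
  t ^ 3 - t + c * deriv θ (c * t) * (-a * t ^ 4 + b * t ^ 2)
    + θ (c * t) * (-(4 * a) * t ^ 3 + 2 * b * t)

noncomputable def sitePotential'' (θ : ℝ → ℝ) (c a b t : ℝ) : ℝ :=
  3 * t ^ 2 - 1 + c ^ 2 * iteratedDeriv 2 θ (c * t) * (-a * t ^ 4 + b * t ^ 2)
    + 2 * c * deriv θ (c * t) * (-(4 * a) * t ^ 3 + 2 * b * t)
    + θ (c * t) * (-(12 * a) * t ^ 2 + 2 * b)

theorem hasDerivAt_neg_mul_pow_four_add_mul_sq (a b t : ℝ) :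
    HasDerivAt (fun t => -a * t ^ 4 + b * t ^ 2) (-(4 * a) * t ^ 3 + 2 * b * t) t :=
  (((hasDerivAt_pow 4 t).const_mul (-a)).fun_add ((hasDerivAt_pow 2 t).const_mul b)).congr_deriv
    (by push_cast; ring)

theorem hasDerivAt_sitePotential {θ : ℝ → ℝ} (hθ : Differentiable ℝ θ) (c a b t : ℝ) :
    HasDerivAt (sitePotential θ c a b) (sitePotential' θ c a b t) t := by
  have hquartic : HasDerivAt (fun t => t ^ 4 / 4 - t ^ 2 / 2) (t ^ 3 - t) t :=
    (((hasDerivAt_pow 4 t).div_const 4).fun_sub ((hasDerivAt_pow 2 t).div_const 2)).congr_deriv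
      (by push_cast; ring)
  exact (hquartic.fun_add ((hθ (c * t)).hasDerivAt.comp_const_mul.fun_mul
    (hasDerivAt_neg_mul_pow_four_add_mul_sq a b t))).congr_deriv
    (by simp only [sitePotential']; ring)

theorem hasDerivAt_sitePotential' {θ : ℝ → ℝ} (hθ : ContDiff ℝ 2 θ) (c a b t : ℝ) :
    HasDerivAt (sitePotential' θ c a b) (sitePotential'' θ c a b t) t := by
  have hθ' : HasDerivAt (deriv θ) (iteratedDeriv 2 θ (c * t)) (c * t) := by
    have h := (hθ.differentiable_iteratedDeriv' 1 (c * t)).hasDerivAt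
    rwa [← iteratedDeriv_succ, iteratedDeriv_one] at h
  have hcubic : HasDerivAt (fun t => t ^ 3 - t) (3 * t ^ 2 - 1) t :=
    ((hasDerivAt_pow 3 t).fun_sub (hasDerivAt_id t)).congr_deriv (by push_cast; ring)
  have hbump' : HasDerivAt (fun t => -(4 * a) * t ^ 3 + 2 * b * t) (-(12 * a) * t ^ 2 + 2 * b) t :=
    (((hasDerivAt_pow 3 t).const_mul (-(4 * a))).fun_add
      ((hasDerivAt_id t).const_mul (2 * b))).congr_deriv (by push_cast; ring)
  have hθc := (hθ.differentiable (by norm_num) (c * t)).hasDerivAt.comp_const_mul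
  exact ((hcubic.fun_add ((hθ'.comp_const_mul.const_mul c).fun_mul
    (hasDerivAt_neg_mul_pow_four_add_mul_sq a b t))).fun_add (hθc.fun_mul hbump')).congr_deriv
    (by simp only [sitePotential'']; ring)

theorem Venergy_add_sum_eq (μ : ℝ) (N : ℕ) (θ : ℝ → ℝ) (c a b : ℝ) (y : Fin N → ℝ) :
    Venergy μ N y + ((∑ k, θ (c * y k) * (-a * y k ^ 4 + b * y k ^ 2)) - N / 4)
      = ∑ k, sitePotential θ c a b (y k) + (1 / 2) * (y ⬝ᵥ Kdisc μ N *ᵥ y) := by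
  have hsite : ∑ k, sitePotential θ c a b (y k) = ∑ k, (y k ^ 4 / 4 - y k ^ 2 / 2)
      + ∑ k, θ (c * y k) * (-a * y k ^ 4 + b * y k ^ 2) := Finset.sum_add_distrib
  have hpoly : ∑ k, (y k ^ 4 / 4 - y k ^ 2 / 2)
      = (1 / 4) * ∑ k, y k ^ 4 - (1 / 2) * ∑ k, y k ^ 2 := by
    simp only [Finset.sum_sub_distrib, ← Finset.sum_div]
    ring
  have hquad : ∑ k, y k * ((Kdisc μ N *ᵥ y) k - y k) = y ⬝ᵥ Kdisc μ N *ᵥ y - ∑ k, y k ^ 2 := by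
    simp only [dotProduct, mul_sub, sq, Finset.sum_sub_distrib]
  rw [Venergy, hsite, hpoly, hquad]
  ring

structure IsCutoff (θ : ℝ → ℝ) : Prop where
  contDiff : ContDiff ℝ 2 θ
  mem_Icc : ∀ r, θ r ∈ Set.Icc (0 : ℝ) 1
  even : ∀ r, θ (-r) = θ r
  eq_one : ∀ r : ℝ, |r| ≤ 1 → θ r = 1
  eq_zero : ∀ r : ℝ, √2 ≤ |r| → θ r = 0
  deriv_nonpos : ∀ r : ℝ, 0 ≤ r → deriv θ r ≤ 0

theorem iteratedDeriv_eq_zero_of_eventuallyEq_const {f : ℝ → ℝ} {x v : ℝ}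
    (h : f =ᶠ[𝓝 x] fun _ => v) {n : ℕ} (hn : n ≠ 0) : iteratedDeriv n f x = 0 := by
  rw [(h.iteratedDeriv n).eq_of_nhds, iteratedDeriv_const, if_neg hn]

namespace IsCutoff

variable {θ : ℝ → ℝ} (hθ : IsCutoff θ)
include hθ

theorem iteratedDeriv_eq_zero {r : ℝ} (hr : |r| < 1 ∨ √2 < |r|) {n : ℕ} (hn : n ≠ 0) :
    iteratedDeriv n θ r = 0 := by
  rcases hr with hr | hr
  · refine iteratedDeriv_eq_zero_of_eventuallyEq_const (v := 1) ?_ hn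
    exact eventually_of_mem ((isOpen_lt continuous_abs continuous_const).mem_nhds hr)
      fun s hs => hθ.eq_one s (le_of_lt hs)
  · refine iteratedDeriv_eq_zero_of_eventuallyEq_const (v := 0) ?_ hn
    exact eventually_of_mem ((isOpen_lt continuous_const continuous_abs).mem_nhds hr)
      fun s hs => hθ.eq_zero s (le_of_lt hs)

theorem mul_deriv_nonpos (r : ℝ) : r * deriv θ r ≤ 0 := by
  rcases le_total 0 r with hr | hr
  · exact mul_nonpos_of_nonneg_of_nonpos hr (hθ.deriv_nonpos r hr)
  · have hodd : deriv θ r = -deriv θ (-r) := by simpa [hθ.even] using deriv_comp_neg θ r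
    nlinarith [hθ.deriv_nonpos (-r) (by linarith)]

theorem sitePotential''_of_abs_lt_one {c a b t : ℝ} (h : |c * t| < 1) :
    sitePotential'' θ c a b t = 3 * t ^ 2 - 1 + (-(12 * a) * t ^ 2 + 2 * b) := by
  have hd : deriv θ (c * t) = 0 := by
    simpa using hθ.iteratedDeriv_eq_zero (Or.inl h) one_ne_zero
  simp [sitePotential'', hd, hθ.iteratedDeriv_eq_zero (Or.inl h) two_ne_zero, hθ.eq_one _ h.le]

theorem sitePotential''_of_sqrt_two_lt_abs {c a b t : ℝ} (h : √2 < |c * t|) :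
    sitePotential'' θ c a b t = 3 * t ^ 2 - 1 := by
  have hd : deriv θ (c * t) = 0 := by
    simpa using hθ.iteratedDeriv_eq_zero (Or.inr h) one_ne_zero
  simp [sitePotential'', hd, hθ.iteratedDeriv_eq_zero (Or.inr h) two_ne_zero, hθ.eq_zero _ h.le]

theorem le_sitePotential''_of_one_le_abs {κ α β c t : ℝ} (hκ : 0 ≤ κ)
    (hθ'' : ∀ r, -κ ≤ iteratedDeriv 2 θ r) (hκα : κ * (1 - α) ≤ 12 * α) (hα : α < 1)
    (hβ : -1 < β) (hc : c ^ 2 * (1 + β) = 1 - α) (h1 : 1 ≤ |c * t|) (h2 : |c * t| ≤ √2) :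
    β ≤ sitePotential'' θ c ((1 - α) / 4) ((1 + β) / 2) t := by
  set s := c ^ 2 * t ^ 2
  have hs1 : 1 ≤ s := by nlinarith [sq_abs (c * t)]
  have hs2 : s ≤ 2 := by
    nlinarith [sq_abs (c * t), Real.sq_sqrt (show (0 : ℝ) ≤ 2 by norm_num), abs_nonneg (c * t)]
  have ht : (1 - α) * t ^ 2 = s * (1 + β) := by rw [← hc]; ring
  have hsQ : 0 ≤ s * (1 + β) := by nlinarith
  have hcurv : -κ * (s * (1 + β) / 4)
      ≤ c ^ 2 * iteratedDeriv 2 θ (c * t) * (-((1 - α) / 4) * t ^ 4 + (1 + β) / 2 * t ^ 2) := by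
    have hX : 0 ≤ s * (1 + β) * (2 - s) / 4 := by nlinarith
    calc
      -κ * (s * (1 + β) / 4) ≤ -κ * (s * (1 + β) * (2 - s) / 4) := by
        nlinarith [mul_nonneg (mul_nonneg hκ hsQ) (sub_nonneg.mpr hs1)]
      _ ≤ iteratedDeriv 2 θ (c * t) * (s * (1 + β) * (2 - s) / 4) :=
        mul_le_mul_of_nonneg_right (hθ'' _) hX
      _ = _ := by linear_combination (iteratedDeriv 2 θ (c * t) * s / 4) * ht
  have hslope :
      0 ≤ 2 * c * deriv θ (c * t) * (-(4 * ((1 - α) / 4)) * t ^ 3 + 2 * ((1 + β) / 2) * t) := by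
    have e : 2 * c * deriv θ (c * t) * (-(4 * ((1 - α) / 4)) * t ^ 3 + 2 * ((1 + β) / 2) * t)
        = 2 * (c * t * deriv θ (c * t)) * ((1 + β) * (1 - s)) := by
      linear_combination (-2 * c * t * deriv θ (c * t)) * ht
    rw [e]
    exact mul_nonneg_of_nonpos_of_nonpos (by linarith [hθ.mul_deriv_nonpos (c * t)]) (by nlinarith)
  have hvalue :
      (1 + β) * (1 - 3 * s) ≤ θ (c * t) * (-(12 * ((1 - α) / 4)) * t ^ 2 + 2 * ((1 + β) / 2)) := by
    have e : -(12 * ((1 - α) / 4)) * t ^ 2 + 2 * ((1 + β) / 2) = (1 + β) * (1 - 3 * s) := by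
      linear_combination (-3) * ht
    rw [e]
    have hY : 0 ≤ (1 + β) * (3 * s - 1) := mul_nonneg (by linarith) (by linarith)
    nlinarith [mul_nonneg (sub_nonneg.mpr (hθ.mem_Icc (c * t)).2) hY]
  have hquartic : κ * (s * (1 + β)) / 4 + 3 * (s * (1 + β)) ≤ 3 * t ^ 2 := by
    refine le_of_mul_le_mul_left ?_ (sub_pos.mpr hα)
    nlinarith [mul_nonneg hsQ (sub_nonneg.mpr hκα)]
  simp only [sitePotential'']
  nlinarith

theorem min_le_sitePotential'' {κ α β : ℝ} (hκ : 0 ≤ κ) (hθ'' : ∀ r, -κ ≤ iteratedDeriv 2 θ r)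
    (hκα : κ * (1 - α) ≤ 12 * α) (hα0 : 0 ≤ α) (hα1 : α < 1) (hβ : 0 ≤ β) (t : ℝ) :
    min β 1 ≤ sitePotential'' θ √((1 - α) / (1 + β)) ((1 - α) / 4) ((1 + β) / 2) t := by
  set c := √((1 - α) / (1 + β))
  have hc : c ^ 2 * (1 + β) = 1 - α := by
    rw [Real.sq_sqrt (div_nonneg (by linarith) (by linarith))]
    field_simp
  rcases lt_or_ge |c * t| 1 with h1 | h1
  · rw [hθ.sitePotential''_of_abs_lt_one h1]
    nlinarith [min_le_left β 1, mul_nonneg hα0 (sq_nonneg t)]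
  rcases le_or_gt |c * t| √2 with h2 | h2
  · exact (min_le_left _ _).trans
      (hθ.le_sitePotential''_of_one_le_abs hκ hθ'' hκα hα1 (by linarith) hc h1 h2)
  · rw [hθ.sitePotential''_of_sqrt_two_lt_abs h2]
    have hct : 2 < c ^ 2 * t ^ 2 := by
      nlinarith [sq_abs (c * t), Real.sq_sqrt (show (0 : ℝ) ≤ 2 by norm_num), Real.sqrt_nonneg 2]
    have hc1 : c ^ 2 ≤ 1 := by nlinarith
    nlinarith [min_le_right β 1, mul_nonneg (sub_nonneg.mpr hc1) (sq_nonneg t)]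

end IsCutoff

noncomputable def cutoffCurvatureBound (n : ℕ) : ℝ := 2 / (√2 - 1) ^ 2 * (1 + 1 / n)

theorem eventually_cutoffCurvatureBound_mul_le {α : ℝ} (hα : 1 / (3 * (2 - √2) ^ 2 + 1) < α) :
    ∀ᶠ n : ℕ in atTop, cutoffCurvatureBound n * (1 - α) ≤ 12 * α := by
  have hlim : Tendsto (fun n : ℕ => cutoffCurvatureBound n * (1 - α)) atTop
      (𝓝 (2 / (√2 - 1) ^ 2 * (1 + 0) * (1 - α))) :=
    ((tendsto_one_div_atTop_nhds_zero_nat.const_add 1).const_mul _).mul_const _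
  refine (hlim.eventually (gt_mem_nhds ?_)).mono fun _ => le_of_lt
  have hs2 : √2 ^ 2 = 2 := Real.sq_sqrt (by norm_num)
  have hs1 : 1 < √2 := by nlinarith [Real.sqrt_nonneg 2]
  have hgap : 1 - α < 6 * (√2 - 1) ^ 2 * α := by
    rw [div_lt_iff₀ (by positivity)] at hα
    nlinarith
  rw [add_zero, mul_one, div_mul_eq_mul_div, div_lt_iff₀ (by nlinarith)]
  linarith

/-- convexification of `V` by a bounded perturbation `W`: for
`α ∈ (1/(3(2−√2)²+1), 1)` there is `n₀` such that for every `β > 0`, `n ≥ n₀`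
and every admissible cut-off `θ`, the function `V + W` is uniformly convex,
where `W(x) = Σ_k θ(c x_k)(−((1−α)/4)x_k⁴ + ((1+β)/2)x_k²) − N/4` and
`c = √((1−α)/(1+β))`. -/
theorem convexification (μ : ℝ) (hμ : 1 < μ) (α : ℝ)
    (hα1 : 1 / (3 * (2 - Real.sqrt 2) ^ 2 + 1) < α) (hα2 : α < 1) :
    ∃ n₀ : ℕ, ∀ β : ℝ, 0 < β → ∀ n : ℕ, n₀ ≤ n →
      ∀ θ : ℝ → ℝ, ContDiff ℝ 2 θ → (∀ r, θ r ∈ Set.Icc (0 : ℝ) 1) →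
        (∀ r, θ (-r) = θ r) →
        (∀ r : ℝ, |r| ≤ 1 → θ r = 1) →
        (∀ r : ℝ, Real.sqrt 2 ≤ |r| → θ r = 0) →
        (∀ r : ℝ, 0 ≤ r → deriv θ r ≤ 0) →
        (∀ r : ℝ, -(2 / (Real.sqrt 2 - 1) ^ 2) * (1 + 1 / (n : ℝ)) ≤ iteratedDeriv 2 θ r) →
        ∃ C : ℝ, 0 < C ∧ ∀ N : ℕ, 2 ≤ N → ∀ x w : Fin N → ℝ,
          C * ∑ k, w k ^ 2 ≤
            hessQF N (fun y => Venergy μ N y +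
              ((∑ k, θ (Real.sqrt ((1 - α) / (1 + β)) * y k) *
                  (-((1 - α) / 4) * y k ^ 4 + ((1 + β) / 2) * y k ^ 2)) - N / 4)) x w := by
  obtain ⟨n₀, hn₀⟩ := eventually_atTop.mp (eventually_cutoffCurvatureBound_mul_le hα1)
  have hα0 : 0 < α := lt_trans (by positivity) hα1
  refine ⟨n₀, fun β hβ n hn θ hθ h01 heven h1 h0 hmono hθ'' =>
    ⟨min β 1, lt_min hβ one_pos, fun N hN x w => ?_⟩⟩
  have hcut : IsCutoff θ := ⟨hθ, h01, heven, h1, h0, hmono⟩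
  have hκ : ∀ r, -cutoffCurvatureBound n ≤ iteratedDeriv 2 θ r := fun r => by
    simpa only [cutoffCurvatureBound, neg_mul] using hθ'' r
  have : NeZero N := ⟨by omega⟩
  simp_rw [Venergy_add_sum_eq]
  rw [hessQF_sum_comp_add_dotProduct_mulVec _
    (hasDerivAt_sitePotential (hθ.differentiable (by norm_num)) _ _ _)
    (hasDerivAt_sitePotential' hθ _ _ _)]
  calc min β 1 * ∑ k, w k ^ 2 = ∑ k, min β 1 * w k ^ 2 := Finset.mul_sum _ _ _
    _ ≤ ∑ k, sitePotential'' θ √((1 - α) / (1 + β)) ((1 - α) / 4) ((1 + β) / 2) (x k) * w k ^ 2 :=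
      Finset.sum_le_sum fun k _ => mul_le_mul_of_nonneg_right
        (hcut.min_le_sitePotential'' (by unfold cutoffCurvatureBound; positivity) hκ (hn₀ n hn)
          hα0.le hα2 hβ.le (x k)) (sq_nonneg _)
    _ ≤ _ := le_add_of_nonneg_right (dotProduct_Kdisc_mulVec_self_nonneg (by linarith) w)
end
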